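/- If A ∈ H²(O) is positive definite, then for any B ∈ H²(O) one has det(A,B)² ≥ det(A)·det(B). -/
import Mathlib


noncomputable section

open Quaternion

/-- The octonions, as the Cayley–Dickson double of the quaternions. -/
@[ext] structure Octonion : Type where
  q1 : Quaternion ℝ
  q2 : Quaternion ℝ

namespace Octonion

def equivProd : Octonion ≃ Quaternion ℝ × Quaternion ℝ :=
  ⟨fun x => (x.q1, x.q2), fun p => ⟨p.1, p.2⟩, fun _ => rfl, fun _ => rfl⟩

instance : AddCommGroup Octonion := equivProd.addCommGroup
instance : Module ℝ Octonion := equivProd.module ℝ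
instance : TopologicalSpace Octonion :=
  TopologicalSpace.induced equivProd inferInstance

instance : One Octonion := ⟨⟨1, 0⟩⟩

/-- Cayley–Dickson multiplication: `(a,b)(c,d) = (ac - d̄b, da + b c̄)`. -/
instance : Mul Octonion :=
  ⟨fun x y => ⟨x.q1 * y.q1 - star y.q2 * x.q2, y.q2 * x.q1 + x.q2 * star y.q1⟩⟩

/-- Octonionic conjugation. -/
def conj (x : Octonion) : Octonion := ⟨star x.q1, -x.q2⟩

/-- The real part of an octonion. -/
def re (x : Octonion) : ℝ := x.q1.re

/-- The imaginary part of an octonion. -/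
def im (x : Octonion) : Octonion := (2⁻¹ : ℝ) • (x - conj x)

/-- The squared norm `|x|²` of an octonion. -/
def normSq (x : Octonion) : ℝ := Quaternion.normSq x.q1 + Quaternion.normSq x.q2

/-- The inverse of an octonion (junk value `0` at `0`). -/
def inv (x : Octonion) : Octonion := (normSq x)⁻¹ • conj x

end Octonion

namespace Octonion

/-- The Hermitian quadratic form `Re(ξ* A ξ)` of `A = [[a, x],[conj x, b]]` at `ξ = (ξ₁, ξ₂)`:
`a|ξ₁|² + b|ξ₂|² + 2 Re(conj(ξ₁) x ξ₂)`. -/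
def qform (a b : ℝ) (x : Octonion) (ξ₁ ξ₂ : Octonion) : ℝ :=
  a * normSq ξ₁ + b * normSq ξ₂ + 2 * re ((conj ξ₁ * x) * ξ₂)

/-- An octonionic Hermitian `2×2` matrix `[[d1, x],[conj x, d2]]`. -/
@[ext] structure Herm2 : Type where
  d1 : ℝ
  d2 : ℝ
  x : Octonion

namespace Herm2

instance : Add Herm2 := ⟨fun A B => ⟨A.d1 + B.d1, A.d2 + B.d2, A.x + B.x⟩⟩
instance : SMul ℝ Herm2 := ⟨fun r A => ⟨r * A.d1, r * A.d2, r • A.x⟩⟩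

/-- Nonnegative definiteness: `Re(ξ* A ξ) ≥ 0` for all `ξ ∈ O²`. -/
def PosSemidef (A : Herm2) : Prop := ∀ ξ₁ ξ₂ : Octonion, 0 ≤ qform A.d1 A.d2 A.x ξ₁ ξ₂

/-- Positive definiteness: `Re(ξ* A ξ) > 0` for all nonzero `ξ ∈ O²`. -/
def PosDef (A : Herm2) : Prop :=
  ∀ ξ₁ ξ₂ : Octonion, ¬(ξ₁ = 0 ∧ ξ₂ = 0) → 0 < qform A.d1 A.d2 A.x ξ₁ ξ₂

/-- The determinant `det A = ab - |x|²`. -/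
def det (A : Herm2) : ℝ := A.d1 * A.d2 - normSq A.x

/-- The mixed determinant `det(A,B) = (1/2)(a₁₁b₂₂ + a₂₂b₁₁ - 2 Re(a₁₂ b₂₁))`,
where `b₂₁ = conj(b₁₂)`. -/
def mixedDet (A B : Herm2) : ℝ :=
  (1 / 2) * (A.d1 * B.d2 + A.d2 * B.d1 - 2 * re (A.x * conj B.x))

end Herm2

end Octonion


namespace Octonion

@[simp] lemma oct_zero_q1 : (0 : Octonion).q1 = 0 := rfl
@[simp] lemma oct_zero_q2 : (0 : Octonion).q2 = 0 := rfl
@[simp] lemma oct_one_q1 : (1 : Octonion).q1 = 1 := rfl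
@[simp] lemma oct_one_q2 : (1 : Octonion).q2 = 0 := rfl
@[simp] lemma oct_add_q1 (x y : Octonion) : (x + y).q1 = x.q1 + y.q1 := rfl
@[simp] lemma oct_add_q2 (x y : Octonion) : (x + y).q2 = x.q2 + y.q2 := rfl
@[simp] lemma oct_smul_q1 (t : ℝ) (x : Octonion) : (t • x).q1 = t • x.q1 := rfl
@[simp] lemma oct_smul_q2 (t : ℝ) (x : Octonion) : (t • x).q2 = t • x.q2 := rfl
@[simp] lemma oct_mul_q1 (x y : Octonion) : (x * y).q1 = x.q1 * y.q1 - star y.q2 * x.q2 := rfl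
@[simp] lemma oct_mul_q2 (x y : Octonion) : (x * y).q2 = y.q2 * x.q1 + x.q2 * star y.q1 := rfl
@[simp] lemma oct_conj_q1 (x : Octonion) : (conj x).q1 = star x.q1 := rfl
@[simp] lemma oct_conj_q2 (x : Octonion) : (conj x).q2 = -x.q2 := rfl

lemma oct_normSq_nonneg (x : Octonion) : 0 ≤ normSq x :=
  add_nonneg Quaternion.normSq_nonneg Quaternion.normSq_nonneg

end Octonion

open Octonion Octonion.Herm2 in
private lemma oct_one_ne_zero : (1 : Octonion) ≠ 0 := by
  intro h
  have := congrArg Octonion.q1 h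
  simp only [oct_one_q1, oct_zero_q1] at this
  exact one_ne_zero this

open Octonion in
private lemma oct_qform_one_zero (a b : ℝ) (x : Octonion) : qform a b x 1 0 = a := by
  simp [qform, Octonion.normSq, Octonion.re]

open Octonion in
private lemma oct_qform_zero_one (a b : ℝ) (x : Octonion) : qform a b x 0 1 = b := by
  simp [qform, Octonion.normSq, Octonion.re]

open Octonion in
private lemma oct_qform_x_smul (a b : ℝ) (x : Octonion) (t : ℝ) :
    qform a b x x (t • 1) = a * Octonion.normSq x + b * t^2 + 2 * (t * Octonion.normSq x) := by
  simp only [qform, Octonion.normSq, Octonion.re, oct_mul_q1, oct_conj_q1, oct_conj_q2, oct_smul_q1, oct_smul_q2,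
    oct_one_q1, oct_one_q2, smul_zero, star_zero, neg_mul, zero_mul, mul_zero, star_neg,
    Quaternion.normSq_def']
  simp [Quaternion.ext_iff, Quaternion.re_mul, Quaternion.imI_mul, Quaternion.imJ_mul,
    Quaternion.imK_mul]
  ring

open Octonion in
private lemma oct_normSq_add_smul (x y : Octonion) (t : ℝ) :
    Octonion.normSq (x + t • y) = Octonion.normSq x + 2*t*Octonion.re (x * Octonion.conj y) + t^2 * Octonion.normSq y := by
  simp only [Octonion.normSq, Octonion.re, oct_add_q1, oct_add_q2, oct_smul_q1, oct_smul_q2, oct_mul_q1,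
    oct_conj_q1, oct_conj_q2, Quaternion.normSq_def', Quaternion.re_mul]
  simp [Quaternion.ext_iff]
  ring

open Octonion in
private lemma oct_cs (x y : Octonion) : (Octonion.re (x * Octonion.conj y))^2 ≤ Octonion.normSq x * Octonion.normSq y := by
  have hk : ∀ t : ℝ, 0 ≤ Octonion.normSq y * (t * t) + (2 * Octonion.re (x * Octonion.conj y)) * t + Octonion.normSq x := by
    intro t
    have h1 := oct_normSq_nonneg (x + t • y)
    rw [oct_normSq_add_smul] at h1
    nlinarith [h1]
  have hd := discrim_le_zero hk
  rw [discrim] at hd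
  nlinarith [hd]

private lemma keyPos (a c p q U V m : ℝ) (ha : 0 < a) (hc : 0 < c) (hp : 0 < p) (hq : 0 < q)
    (hU : 0 ≤ U) (hV : 0 ≤ V) (hdA : U < a*c) (hdB : V ≤ p*q) (hm : m^2 ≤ U*V) :
    (a*c - U)*(p*q - V) ≤ ((a*q + c*p)/2 - m)^2 := by
  set w := Real.sqrt ((a*c)*(p*q)) with hw
  set r := Real.sqrt (U*V) with hr
  have hw0 : 0 ≤ w := Real.sqrt_nonneg _
  have hr0 : 0 ≤ r := Real.sqrt_nonneg _
  have hw2 : w^2 = (a*c)*(p*q) := Real.sq_sqrt (by positivity)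
  have hr2 : r^2 = U*V := Real.sq_sqrt (mul_nonneg hU hV)
  have h3 : r ≤ w := Real.sqrt_le_sqrt (by nlinarith)
  have h1 : m ≤ r := by
    have : |m| ≤ r := by
      rw [hr, ← Real.sqrt_sq_eq_abs]
      exact Real.sqrt_le_sqrt hm
    linarith [le_abs_self m]
  have h2 : 2*w ≤ a*q + c*p := by
    nlinarith [sq_nonneg (a*q - c*p), sq_nonneg (a*q + c*p - 2*w), mul_pos ha hq, mul_pos hc hp, hw0]
  have h4 : 2*(w*r) ≤ a*c*V + p*q*U := by
    nlinarith [sq_nonneg (a*c*V - p*q*U), sq_nonneg (a*c*V + p*q*U - 2*(w*r)),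
      mul_nonneg hw0 hr0, mul_nonneg (mul_nonneg ha.le hc.le) hV,
      mul_nonneg (mul_nonneg hp.le hq.le) hU]
  have h5 : w - r ≤ (a*q + c*p)/2 - m := by linarith
  have h6 : (w - r)^2 ≤ ((a*q + c*p)/2 - m)^2 := by nlinarith
  nlinarith

private lemma key (a c p q U V m : ℝ) (ha : 0 < a) (hc : 0 < c)
    (hU : 0 ≤ U) (hV : 0 ≤ V) (hdA : U < a*c) (hm : m^2 ≤ U*V) :
    (a*c - U)*(p*q - V) ≤ ((a*q + c*p)/2 - m)^2 := by
  rcases le_or_gt (p*q) V with hpq | hpq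
  · have : (a*c - U)*(p*q - V) ≤ 0 :=
      mul_nonpos_of_nonneg_of_nonpos (by linarith) (by linarith)
    nlinarith [sq_nonneg ((a*q + c*p)/2 - m)]
  · have hpq0 : 0 < p*q := lt_of_le_of_lt hV hpq
    rcases lt_or_ge 0 p with hp | hp
    · have hq : 0 < q := by nlinarith
      exact keyPos a c p q U V m ha hc hp hq hU hV hdA hpq.le hm
    · have hp' : 0 < -p := by
        by_contra h
        push_neg at h
        have hp0 : p = 0 := le_antisymm hp (by linarith)
        rw [hp0, zero_mul] at hpq0
        exact lt_irrefl 0 hpq0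
      have hq' : 0 < -q := by nlinarith
      have := keyPos a c (-p) (-q) U V (-m) ha hc hp' hq' hU hV hdA (by nlinarith) (by nlinarith)
      nlinarith [this]

open Octonion in
/-- If `A` is positive definite, then for any `B`,
`det(A,B)² ≥ det(A)·det(B)`. -/
theorem herm2_mixedDet_sq_ge (A B : Herm2) (hA : A.PosDef) :
    A.det * B.det ≤ (A.mixedDet B) ^ 2 := by

  obtain ⟨a, c, x⟩ := A
  obtain ⟨p, q, y⟩ := B
  simp only [Herm2.det, Herm2.mixedDet]
  set U := normSq x with hUdef
  set V := normSq y with hVdef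
  set m := re (x * conj y) with hmdef
  have hU : 0 ≤ U := oct_normSq_nonneg x
  have hV : 0 ≤ V := oct_normSq_nonneg y
  have ha : 0 < a := by
    have h := hA 1 0 (fun h => oct_one_ne_zero h.1)
    rwa [oct_qform_one_zero] at h
  have hc : 0 < c := by
    have h := hA 0 1 (fun h => oct_one_ne_zero h.2)
    rwa [oct_qform_zero_one] at h
  have hdA : U < a * c := by
    rcases eq_or_ne x 0 with hx | hx
    · have : U = 0 := by simp [hUdef, hx, Octonion.normSq]
      rw [this]; positivity
    · have h := hA x ((-(U/c)) • 1) (fun h => hx h.1)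
      rw [oct_qform_x_smul] at h
      have h' : a * U + U^2/c - 2 * (U/c) * U > 0 := by
        have : c * (-(U/c))^2 = U^2/c := by field_simp
        nlinarith [h]
      have hUpos : 0 < U := by
        rcases lt_or_eq_of_le hU with h0 | h0
        · exact h0
        · exfalso
          rw [← h0] at h'
          simp at h'
      have := mul_pos h' hc
      have hexp : (a * U + U^2/c - 2 * (U/c) * U) * c = a * U * c - U^2 := by
        field_simp; ring
      rw [hexp] at this
      nlinarith [this, hUpos]
  have hm : m^2 ≤ U * V := oct_cs x y
  have hkey := key a c p q U V m ha hc hU hV hdA hm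
  nlinarith [hkey]
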